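/- For every ε ∈ (0, 1/√n) and every integer T satisfying both T ≥ 4·t_mix(ε/2)⁴/ε³ + 4·t_mix(ε/2)²/ε² + 1/ε and √(ε/T) − 1/T ≤ ε(1 − √n·ε)/(4 n^{3/2} t_mix(ε/2)), one has ‖π₀ P_{1/T} P_{2/T} ⋯ P_{k/T} − π_{k/T}‖_TV ≤ ε for every integer k with 1 ≤ k ≤ T. -/

import Mathlib

open Matrix BigOperators

/-- A row-stochastic matrix: nonnegative entries, each row sums to 1. -/
def IsStochastic {n : ℕ} (P : Matrix (Fin n) (Fin n) ℝ) : Prop :=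
  (∀ i j, 0 ≤ P i j) ∧ ∀ i, ∑ j, P i j = 1

/-- Irreducibility: every state can reach every other state. -/
def MCIrreducible {n : ℕ} (P : Matrix (Fin n) (Fin n) ℝ) : Prop :=
  ∀ i j, ∃ m : ℕ, 0 < (P ^ m) i j

/-- Aperiodicity (for a finite chain): every state has eventually positive return
probabilities. -/
def MCAperiodic {n : ℕ} (P : Matrix (Fin n) (Fin n) ℝ) : Prop :=
  ∀ i : Fin n, ∃ N : ℕ, ∀ m : ℕ, N ≤ m → 0 < (P ^ m) i i

/-- A probability (row) vector. -/
def IsProbVec {n : ℕ} (v : Fin n → ℝ) : Prop :=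
  (∀ i, 0 ≤ v i) ∧ ∑ i, v i = 1

/-- Total variation distance between two vectors. -/
noncomputable def tvDist {n : ℕ} (μ ν : Fin n → ℝ) : ℝ :=
  (1 / 2) * ∑ i, |μ i - ν i|

/-- Euclidean norm on ℝⁿ. -/
noncomputable def euclNorm {n : ℕ} (v : Fin n → ℝ) : ℝ :=
  Real.sqrt (∑ i, (v i) ^ 2)

/-- Mixing time of `P` with stationary distribution `π`. -/
noncomputable def mixingTime {n : ℕ} (P : Matrix (Fin n) (Fin n) ℝ)
    (π : Fin n → ℝ) (ε : ℝ) : ℕ :=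
  sInf {T : ℕ | ∀ ν : Fin n → ℝ, IsProbVec ν → tvDist (ν ᵥ* (P ^ T)) π ≤ ε}

/-- The interpolation `P_t = (1-t)·P₀ + t·P₁`. -/
noncomputable def Pt {n : ℕ} (P₀ P₁ : Matrix (Fin n) (Fin n) ℝ) (t : ℝ) :
    Matrix (Fin n) (Fin n) ℝ :=
  (1 - t) • P₀ + t • P₁

/-- The ordered product `P_{(j+1)/T} P_{(j+2)/T} ⋯ P_{k/T}` (identity if `j ≥ k`). -/
noncomputable def prodSeg {n : ℕ} (P₀ P₁ : Matrix (Fin n) (Fin n) ℝ) (T j k : ℕ) :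
    Matrix (Fin n) (Fin n) ℝ :=
  ((List.range (k - j)).map (fun i => Pt P₀ P₁ (((j : ℝ) + (i : ℝ) + 1) / (T : ℝ)))).prod

/-- The ordered product `P_{1/T} P_{2/T} ⋯ P_{k/T}`. -/
noncomputable def adiabProd {n : ℕ} (P₀ P₁ : Matrix (Fin n) (Fin n) ℝ) (T k : ℕ) :
    Matrix (Fin n) (Fin n) ℝ :=
  prodSeg P₀ P₁ T 0 k

/-- Adiabatic time of the adiabatic evolution between `P₀` and `P₁`,
with `π₁` the stationary distribution of `P₁`. -/
noncomputable def adiabaticTime {n : ℕ} (P₀ P₁ : Matrix (Fin n) (Fin n) ℝ)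
    (π₁ : Fin n → ℝ) (ε : ℝ) : ℕ :=
  sInf {T' : ℕ | ∀ T : ℕ, T' ≤ T → ∀ ν : Fin n → ℝ, IsProbVec ν →
    tvDist ((ν ᵥ* P₀) ᵥ* adiabProd P₀ P₁ T T) π₁ ≤ ε}

/-- Stable adiabatic time, where `π s` is the stationary distribution of `P_s`. -/
noncomputable def stableAdiabaticTime {n : ℕ} (P₀ P₁ : Matrix (Fin n) (Fin n) ℝ)
    (π : ℝ → Fin n → ℝ) (ε : ℝ) : ℕ :=
  sInf {T : ℕ | ∀ k : ℕ, 1 ≤ k → k ≤ T →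
    tvDist ((π 0) ᵥ* adiabProd P₀ P₁ T k) (π ((k : ℝ) / (T : ℝ))) < ε}

/-- `t_mix(ε) = sup_{s ∈ [0,1]} t_mix(P_s, ε)`, where `π s` is the stationary
distribution of `P_s`. -/
noncomputable def maxMixingTime {n : ℕ} (P₀ P₁ : Matrix (Fin n) (Fin n) ℝ)
    (π : ℝ → Fin n → ℝ) (ε : ℝ) : ℕ :=
  sSup {m : ℕ | ∃ s ∈ Set.Icc (0 : ℝ) 1, m = mixingTime (Pt P₀ P₁ s) (π s) ε}

/-- `s` is a singular value of `A`: `s ≥ 0` and `s²` is an eigenvalue of `A Aᵀ`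
(for a left eigenvector). -/
def IsSingularValue {n : ℕ} (A : Matrix (Fin n) (Fin n) ℝ) (s : ℝ) : Prop :=
  0 ≤ s ∧ ∃ v : Fin n → ℝ, v ≠ 0 ∧ v ᵥ* (A * Aᵀ) = (s ^ 2) • v

/-- `σ` is the smallest nonzero (positive) singular value of `A`. -/
def IsSmallestPosSingularValue {n : ℕ} (A : Matrix (Fin n) (Fin n) ℝ) (σ : ℝ) : Prop :=
  0 < σ ∧ IsSingularValue A σ ∧ ∀ s : ℝ, 0 < s → IsSingularValue A s → σ ≤ s

/-!
Doeblin's argument bounds the mixing times of all `P_s` uniformly, so `M = t_mix(ε/2)` is a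
mixing horizon for every `P_s`. Each of the last `M` factors of `P_{1/T} ⋯ P_{k/T}` has rows
within `ℓ¹` distance `2M/T` of those of `P_{k/T}`, and stochastic matrices do not expand total
variation, so telescoping puts `π₀ P_{1/T} ⋯ P_{k/T}` within `M²/T` of a distribution run for
`M` steps of `P_{k/T}`, hence within `M²/T + ε/2` of `π_{k/T}`. The lower bound on `T` gives
`M²/T ≤ ε/4`.
-/

open Finset

section Stochastic

variable {n : ℕ}

theorem isStochastic_iff_mem_rowStochastic {P : Matrix (Fin n) (Fin n) ℝ} :
    IsStochastic P ↔ P ∈ rowStochastic ℝ (Fin n) :=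
  mem_rowStochastic_iff_sum.symm

theorem IsStochastic.pow {P : Matrix (Fin n) (Fin n) ℝ} (hP : IsStochastic P) (m : ℕ) :
    IsStochastic (P ^ m) :=
  isStochastic_iff_mem_rowStochastic.2 (pow_mem (isStochastic_iff_mem_rowStochastic.1 hP) m)

theorem IsStochastic.list_prod {L : List (Matrix (Fin n) (Fin n) ℝ)}
    (hL : ∀ A ∈ L, IsStochastic A) : IsStochastic L.prod :=
  isStochastic_iff_mem_rowStochastic.2
    (list_prod_mem fun A hA => isStochastic_iff_mem_rowStochastic.1 (hL A hA))

theorem IsProbVec.vecMul {v : Fin n → ℝ} {A : Matrix (Fin n) (Fin n) ℝ} (hv : IsProbVec v)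
    (hA : IsStochastic A) : IsProbVec (v ᵥ* A) := by
  rw [isStochastic_iff_mem_rowStochastic] at hA
  refine ⟨nonneg_vecMul_of_mem_rowStochastic hA hv.1, ?_⟩
  simpa [dotProduct_one] using
    vecMul_dotProduct_one_eq_one_rowStochastic hA (by simpa [dotProduct_one] using hv.2)

theorem vecMul_pow_eq_self {P : Matrix (Fin n) (Fin n) ℝ} {p : Fin n → ℝ}
    (hp : p ᵥ* P = p) (m : ℕ) : p ᵥ* (P ^ m) = p := by
  induction m with
  | zero => simp
  | succ m ih => rw [pow_succ, ← vecMul_vecMul, ih, hp]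

end Stochastic

section TotalVariation

variable {n : ℕ}

theorem tvDist_triangle (μ ρ ν : Fin n → ℝ) : tvDist μ ν ≤ tvDist μ ρ + tvDist ρ ν := by
  unfold tvDist
  rw [← mul_add, ← sum_add_distrib]
  gcongr with i
  exact abs_sub_le _ _ _

theorem tvDist_le_one {μ ν : Fin n → ℝ} (hμ : IsProbVec μ) (hν : IsProbVec ν) :
    tvDist μ ν ≤ 1 := by
  have : ∑ i, |μ i - ν i| ≤ ∑ i, (μ i + ν i) := by
    gcongr with i
    rw [abs_le]
    constructor <;> linarith [hμ.1 i, hν.1 i]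
  rw [sum_add_distrib, hμ.2, hν.2] at this
  unfold tvDist
  linarith

theorem sum_abs_vecMul_le (x : Fin n → ℝ) (D : Matrix (Fin n) (Fin n) ℝ) :
    ∑ j, |(x ᵥ* D) j| ≤ ∑ i, |x i| * ∑ j, |D i j| :=
  calc ∑ j, |(x ᵥ* D) j| ≤ ∑ j, ∑ i, |x i * D i j| := by
        simp only [vecMul_apply_eq_sum]
        exact sum_le_sum fun j _ => abs_sum_le_sum_abs _ _
    _ = ∑ i, |x i| * ∑ j, |D i j| := by
        rw [sum_comm]
        simp [abs_mul, mul_sum]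

theorem tvDist_vecMul_le_of_le_apply {Q : Matrix (Fin n) (Fin n) ℝ} (hQ : IsStochastic Q)
    {δ : ℝ} (hδ : ∀ i j, δ ≤ Q i j) {μ ν : Fin n → ℝ} (hμ : IsProbVec μ) (hν : IsProbVec ν) :
    tvDist (μ ᵥ* Q) (ν ᵥ* Q) ≤ (1 - n * δ) * tvDist μ ν := by
  set D : Matrix (Fin n) (Fin n) ℝ := Q - Matrix.of fun _ _ => δ
  -- `μ - ν` has zero mass, so it does not see the constant part of `Q`
  have hD : μ ᵥ* Q - ν ᵥ* Q = (μ - ν) ᵥ* D := by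
    have hconst : (μ - ν) ᵥ* (Matrix.of fun _ _ => δ : Matrix (Fin n) (Fin n) ℝ) = 0 := by
      ext j
      simp [vecMul_apply_eq_sum, ← sum_mul, hμ.2, hν.2]
    rw [vecMul_sub, hconst, sub_zero, sub_vecMul]
  have hrow : ∀ i, ∑ j, |D i j| = 1 - n * δ := fun i => by
    simp [D, abs_of_nonneg (sub_nonneg.2 (hδ i _)), sum_sub_distrib, hQ.2 i]
  unfold tvDist
  calc 1 / 2 * ∑ j, |(μ ᵥ* Q) j - (ν ᵥ* Q) j| = 1 / 2 * ∑ j, |((μ - ν) ᵥ* D) j| := by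
        rw [← hD]; rfl
    _ ≤ 1 / 2 * ∑ i, |(μ - ν) i| * ∑ j, |D i j| :=
        mul_le_mul_of_nonneg_left (sum_abs_vecMul_le _ _) (by norm_num)
    _ = (1 - n * δ) * (1 / 2 * ∑ i, |μ i - ν i|) := by
        simp only [hrow, ← sum_mul, Pi.sub_apply]; ring

theorem tvDist_vecMul_le {Q : Matrix (Fin n) (Fin n) ℝ} (hQ : IsStochastic Q)
    {μ ν : Fin n → ℝ} (hμ : IsProbVec μ) (hν : IsProbVec ν) :
    tvDist (μ ᵥ* Q) (ν ᵥ* Q) ≤ tvDist μ ν := by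
  simpa using tvDist_vecMul_le_of_le_apply hQ hQ.1 hμ hν

theorem tvDist_vecMul_vecMul_le {μ : Fin n → ℝ} (hμ : IsProbVec μ)
    {A B : Matrix (Fin n) (Fin n) ℝ} {c : ℝ} (hAB : ∀ i, ∑ j, |A i j - B i j| ≤ c) :
    tvDist (μ ᵥ* A) (μ ᵥ* B) ≤ c / 2 := by
  have := sum_abs_vecMul_le μ (A - B)
  simp only [vecMul_sub, Pi.sub_apply, Matrix.sub_apply, abs_of_nonneg (hμ.1 _)] at this
  have hc : ∑ i, μ i * ∑ j, |A i j - B i j| ≤ c :=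
    calc _ ≤ ∑ i, μ i * c := sum_le_sum fun i _ => mul_le_mul_of_nonneg_left (hAB i) (hμ.1 i)
      _ = c := by rw [← sum_mul, hμ.2, one_mul]
  unfold tvDist
  linarith

theorem tvDist_vecMul_list_prod_le {B : Matrix (Fin n) (Fin n) ℝ} (hB : IsStochastic B) {c : ℝ}
    {L : List (Matrix (Fin n) (Fin n) ℝ)} (hL : ∀ A ∈ L, IsStochastic A)
    (hLB : ∀ A ∈ L, ∀ i, ∑ j, |A i j - B i j| ≤ c) {μ : Fin n → ℝ} (hμ : IsProbVec μ) :
    tvDist (μ ᵥ* L.prod) (μ ᵥ* B ^ L.length) ≤ L.length * c / 2 := by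
  induction L generalizing μ with
  | nil => simp [tvDist]
  | cons A L ih =>
    have hA := hL A List.mem_cons_self
    rw [List.prod_cons, List.length_cons, pow_succ', ← vecMul_vecMul, ← vecMul_vecMul]
    have hfirst := tvDist_vecMul_vecMul_le hμ (hLB A List.mem_cons_self)
    have hrest := ih (fun A' h => hL A' (List.mem_cons_of_mem _ h))
      (fun A' h => hLB A' (List.mem_cons_of_mem _ h)) (hμ.vecMul hA)
    have hcontr := tvDist_vecMul_le (hB.pow L.length) (hμ.vecMul hA) (hμ.vecMul hB)
    have := tvDist_triangle ((μ ᵥ* A) ᵥ* L.prod) ((μ ᵥ* A) ᵥ* B ^ L.length)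
      ((μ ᵥ* B) ᵥ* B ^ L.length)
    push_cast
    linarith

end TotalVariation

section Primitive

variable {n : ℕ}

theorem pow_apply_le_pow_apply {A B : Matrix (Fin n) (Fin n) ℝ} (hA : ∀ i j, 0 ≤ A i j)
    (hAB : ∀ i j, A i j ≤ B i j) (m : ℕ) (i j : Fin n) : (A ^ m) i j ≤ (B ^ m) i j := by
  induction m generalizing j with
  | zero => rfl
  | succ m ih =>
    simp only [pow_succ, mul_apply]
    exact sum_le_sum fun l _ =>
      mul_le_mul (ih l) (hAB l j) (hA l j) ((pow_apply_nonneg hA m i l).trans (ih l))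

theorem pow_apply_mul_pow_apply_le {A : Matrix (Fin n) (Fin n) ℝ} (hA : ∀ i j, 0 ≤ A i j)
    (a b : ℕ) (i l j : Fin n) : (A ^ a) i l * (A ^ b) l j ≤ (A ^ (a + b)) i j := by
  rw [pow_add, mul_apply]
  exact single_le_sum (f := fun l => (A ^ a) i l * (A ^ b) l j)
    (fun l _ => mul_nonneg (pow_apply_nonneg hA a i l) (pow_apply_nonneg hA b l j)) (mem_univ l)

theorem eventually_pow_apply_pos {P : Matrix (Fin n) (Fin n) ℝ} (hP : ∀ i j, 0 ≤ P i j)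
    (hi : MCIrreducible P) (ha : MCAperiodic P) :
    ∀ᶠ m in Filter.atTop, ∀ i j, 0 < (P ^ m) i j := by
  choose N hN using ha
  choose r hr using hi
  refine Filter.eventually_atTop.2 ⟨univ.sup fun p : Fin n × Fin n => N p.1 + r p.1 p.2,
    fun m hm i j => ?_⟩
  have hle : N i + r i j ≤ m := (le_sup (f := fun p : Fin n × Fin n => N p.1 + r p.1 p.2)
    (mem_univ (i, j))).trans hm
  calc 0 < (P ^ (m - r i j)) i i * (P ^ r i j) i j := mul_pos (hN i _ (by omega)) (hr i j)
    _ ≤ (P ^ (m - r i j + r i j)) i j := pow_apply_mul_pow_apply_le hP _ _ i i j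
    _ = (P ^ m) i j := by rw [Nat.sub_add_cancel (by omega)]

end Primitive

section Interpolation

variable {n : ℕ} {P₀ P₁ : Matrix (Fin n) (Fin n) ℝ}

theorem Pt_apply (t : ℝ) (i j : Fin n) : Pt P₀ P₁ t i j = (1 - t) * P₀ i j + t * P₁ i j := rfl

theorem isStochastic_Pt (hP₀ : IsStochastic P₀) (hP₁ : IsStochastic P₁) {t : ℝ}
    (ht : t ∈ Set.Icc (0 : ℝ) 1) : IsStochastic (Pt P₀ P₁ t) := by
  refine ⟨fun i j => ?_, fun i => ?_⟩
  · rw [Pt_apply]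
    have := hP₀.1 i j
    have := hP₁.1 i j
    nlinarith [ht.1, ht.2]
  · simp only [Pt_apply, sum_add_distrib, ← mul_sum, hP₀.2 i, hP₁.2 i]
    ring

theorem sum_abs_Pt_sub_Pt_le (hP₀ : IsStochastic P₀) (hP₁ : IsStochastic P₁) (a b : ℝ)
    (i : Fin n) : ∑ j, |Pt P₀ P₁ a i j - Pt P₀ P₁ b i j| ≤ 2 * |a - b| :=
  calc ∑ j, |Pt P₀ P₁ a i j - Pt P₀ P₁ b i j| = ∑ j, |a - b| * |P₁ i j - P₀ i j| := by
        refine sum_congr rfl fun j _ => ?_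
        rw [← abs_mul, Pt_apply, Pt_apply]
        ring_nf
    _ ≤ ∑ j, |a - b| * (P₀ i j + P₁ i j) := by
        gcongr with j
        rw [abs_le]
        constructor <;> linarith [hP₀.1 i j, hP₁.1 i j]
    _ = 2 * |a - b| := by rw [← mul_sum, sum_add_distrib, hP₀.2 i, hP₁.2 i]; ring

/-- Every `P_s` dominates half of `P₀` or half of `P₁` entrywise, so a common positive power
of `P₀` and `P₁` gives a minorization that is uniform in `s`. -/
theorem exists_pos_le_Pt_pow_apply [Nonempty (Fin n)] (hP₀ : IsStochastic P₀)
    (hP₀i : MCIrreducible P₀) (hP₀a : MCAperiodic P₀) (hP₁ : IsStochastic P₁)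
    (hP₁i : MCIrreducible P₁) (hP₁a : MCAperiodic P₁) :
    ∃ N : ℕ, ∃ δ > 0, ∀ s ∈ Set.Icc (0 : ℝ) 1, ∀ i j, δ ≤ (Pt P₀ P₁ s ^ N) i j := by
  obtain ⟨N, hN₀, hN₁⟩ := ((eventually_pow_apply_pos hP₀.1 hP₀i hP₀a).and
    (eventually_pow_apply_pos hP₁.1 hP₁i hP₁a)).exists
  obtain ⟨p, hp⟩ := Finite.exists_min fun p : Fin n × Fin n =>
    min ((P₀ ^ N) p.1 p.2) ((P₁ ^ N) p.1 p.2)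
  refine ⟨N, (1 / 2) ^ N * min ((P₀ ^ N) p.1 p.2) ((P₁ ^ N) p.1 p.2),
    mul_pos (by positivity) (lt_min (hN₀ _ _) (hN₁ _ _)), fun s hs i j => ?_⟩
  have hmin := hp (i, j)
  have hdom : ∀ P : Matrix (Fin n) (Fin n) ℝ, IsStochastic P →
      (∀ i j, P i j / 2 ≤ Pt P₀ P₁ s i j) →
      (1 / 2) ^ N * (P ^ N) i j ≤ (Pt P₀ P₁ s ^ N) i j := fun P hP hPs => by
    rw [← smul_eq_mul, ← Matrix.smul_apply, ← smul_pow]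
    refine pow_apply_le_pow_apply (fun i j => ?_) (fun i j => ?_) N i j
    · simpa using mul_nonneg (by norm_num : (0 : ℝ) ≤ 1 / 2) (hP.1 i j)
    · simpa [div_eq_inv_mul] using hPs i j
  rcases le_total s (1 / 2) with hs2 | hs2
  · refine le_trans ?_ (hdom P₀ hP₀ fun i j => ?_)
    · gcongr
      exact hmin.trans (min_le_left _ _)
    · rw [Pt_apply]
      nlinarith [hP₀.1 i j, hP₁.1 i j, hs.1]
  · refine le_trans ?_ (hdom P₁ hP₁ fun i j => ?_)
    · gcongr
      exact hmin.trans (min_le_right _ _)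
    · rw [Pt_apply]
      nlinarith [hP₀.1 i j, hP₁.1 i j, hs.2]

end Interpolation

section Mixing

variable {n : ℕ}

def IsMixingHorizon (P : Matrix (Fin n) (Fin n) ℝ) (p : Fin n → ℝ) (ε : ℝ) (T : ℕ) : Prop :=
  ∀ ν, IsProbVec ν → tvDist (ν ᵥ* P ^ T) p ≤ ε

variable {P : Matrix (Fin n) (Fin n) ℝ} {p : Fin n → ℝ} {ε : ℝ}

theorem IsMixingHorizon.mono (hP : IsStochastic P) {a b : ℕ} (ha : IsMixingHorizon P p ε a)
    (hab : a ≤ b) : IsMixingHorizon P p ε b := fun ν hν => by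
  rw [← Nat.sub_add_cancel hab, pow_add, ← vecMul_vecMul]
  exact ha _ (hν.vecMul (hP.pow _))

theorem isMixingHorizon_mixingTime {T : ℕ} (h : IsMixingHorizon P p ε T) :
    IsMixingHorizon P p ε (mixingTime P p ε) :=
  Nat.sInf_mem (s := {T | IsMixingHorizon P p ε T}) ⟨T, h⟩

theorem mixingTime_le {T : ℕ} (h : IsMixingHorizon P p ε T) :
    mixingTime P p ε ≤ T :=
  Nat.sInf_le (s := {T | IsMixingHorizon P p ε T}) h

theorem isMixingHorizon_mul_of_le_pow_apply [Nonempty (Fin n)] (hP : IsStochastic P)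
    (hp : IsProbVec p) (hpP : p ᵥ* P = p) {N : ℕ} {δ : ℝ} (hδ : ∀ i j, δ ≤ (P ^ N) i j)
    (q : ℕ) : IsMixingHorizon P p ((1 - n * δ) ^ q) (N * q) := by
  have hrate : 0 ≤ 1 - n * δ := by
    obtain ⟨i⟩ := ‹Nonempty (Fin n)›
    have := sum_le_sum fun j (_ : j ∈ univ) => hδ i j
    simp only [(hP.pow N).2 i, sum_const, card_univ, Fintype.card_fin, nsmul_eq_mul] at this
    linarith
  induction q with
  | zero => exact fun ν hν => by simpa using tvDist_le_one hν hp
  | succ q ih =>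
    intro ν hν
    rw [Nat.mul_succ, pow_add, ← vecMul_vecMul, ← vecMul_pow_eq_self hpP N, pow_succ]
    calc _ ≤ (1 - n * δ) * tvDist (ν ᵥ* P ^ (N * q)) p :=
          tvDist_vecMul_le_of_le_apply (hP.pow N) hδ (hν.vecMul (hP.pow _)) hp
      _ ≤ (1 - n * δ) * (1 - n * δ) ^ q := by gcongr; exact ih ν hν
      _ = (1 - n * δ) ^ q * (1 - n * δ) := mul_comm _ _

variable {P₀ P₁ : Matrix (Fin n) (Fin n) ℝ} {π : ℝ → Fin n → ℝ}

theorem exists_isMixingHorizon_Pt [Nonempty (Fin n)] (hP₀ : IsStochastic P₀)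
    (hP₀i : MCIrreducible P₀) (hP₀a : MCAperiodic P₀) (hP₁ : IsStochastic P₁)
    (hP₁i : MCIrreducible P₁) (hP₁a : MCAperiodic P₁)
    (hπ : ∀ t ∈ Set.Icc (0 : ℝ) 1, IsProbVec (π t) ∧ (π t) ᵥ* (Pt P₀ P₁ t) = π t)
    (hε : 0 < ε) : ∃ K, ∀ s ∈ Set.Icc (0 : ℝ) 1, IsMixingHorizon (Pt P₀ P₁ s) (π s) ε K := by
  obtain ⟨N, δ, hδ, hN⟩ := exists_pos_le_Pt_pow_apply hP₀ hP₀i hP₀a hP₁ hP₁i hP₁a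
  have hn : (0 : ℝ) < n := by exact_mod_cast Fin.pos_iff_nonempty.2 ‹_›
  obtain ⟨q, hq⟩ := exists_pow_lt_of_lt_one hε (by linarith [mul_pos hn hδ] : 1 - n * δ < 1)
  refine ⟨N * q, fun s hs ν hν => ?_⟩
  exact (isMixingHorizon_mul_of_le_pow_apply (isStochastic_Pt hP₀ hP₁ hs) (hπ s hs).1
    (hπ s hs).2 (hN s hs) q ν hν).trans hq.le

/-- The `sSup` in `maxMixingTime` would be a junk `0` for an unbounded set of mixing times;
Doeblin's bound `exists_isMixingHorizon_Pt` rules this out. -/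
theorem isMixingHorizon_maxMixingTime [Nonempty (Fin n)] (hP₀ : IsStochastic P₀)
    (hP₀i : MCIrreducible P₀) (hP₀a : MCAperiodic P₀) (hP₁ : IsStochastic P₁)
    (hP₁i : MCIrreducible P₁) (hP₁a : MCAperiodic P₁)
    (hπ : ∀ t ∈ Set.Icc (0 : ℝ) 1, IsProbVec (π t) ∧ (π t) ᵥ* (Pt P₀ P₁ t) = π t)
    (hε : 0 < ε) {s : ℝ} (hs : s ∈ Set.Icc (0 : ℝ) 1) :
    IsMixingHorizon (Pt P₀ P₁ s) (π s) ε (maxMixingTime P₀ P₁ π ε) := by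
  obtain ⟨K, hK⟩ := exists_isMixingHorizon_Pt hP₀ hP₀i hP₀a hP₁ hP₁i hP₁a hπ hε
  have hbdd : BddAbove {m | ∃ s ∈ Set.Icc (0 : ℝ) 1, m = mixingTime (Pt P₀ P₁ s) (π s) ε} :=
    ⟨K, by rintro _ ⟨s, hs, rfl⟩; exact mixingTime_le (hK s hs)⟩
  exact (isMixingHorizon_mixingTime (hK s hs)).mono (isStochastic_Pt hP₀ hP₁ hs)
    (le_csSup hbdd ⟨s, hs, rfl⟩)

end Mixing

section Adiabatic

variable {n : ℕ} {P₀ P₁ : Matrix (Fin n) (Fin n) ℝ}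

theorem isStochastic_Pt_div (hP₀ : IsStochastic P₀) (hP₁ : IsStochastic P₁) {m T : ℕ}
    (hm : m ≤ T) : IsStochastic (Pt P₀ P₁ (m / T)) :=
  isStochastic_Pt hP₀ hP₁ ⟨by positivity, div_le_one_of_le₀ (by exact_mod_cast hm) T.cast_nonneg⟩

theorem prodSeg_eq_prod_map (T j k : ℕ) : prodSeg P₀ P₁ T j k =
    ((List.range (k - j)).map fun i : ℕ => Pt P₀ P₁ ((j + i + 1 : ℕ) / T)).prod := by
  simp only [prodSeg, List.pure_def, List.bind_eq_flatMap]
  rw [show (fun a : ℕ => [(a : ℝ)]) = pure ∘ Nat.cast from rfl, List.flatMap_pure_eq_map,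
    List.map_map]
  refine congrArg List.prod (List.map_congr_left fun i _ => ?_)
  push_cast
  rfl

theorem exists_prodSeg_eq_list_prod (T j k : ℕ) :
    ∃ L : List (Matrix (Fin n) (Fin n) ℝ), prodSeg P₀ P₁ T j k = L.prod ∧ L.length = k - j ∧
      ∀ A ∈ L, ∃ m, j < m ∧ m ≤ k ∧ A = Pt P₀ P₁ (m / T) := by
  refine ⟨_, prodSeg_eq_prod_map T j k, by simp, ?_⟩
  simp only [List.mem_map, List.mem_range]
  rintro _ ⟨i, hi, rfl⟩
  exact ⟨j + i + 1, by omega, by omega, rfl⟩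

theorem adiabProd_mul_prodSeg (T : ℕ) {j k : ℕ} (hjk : j ≤ k) :
    adiabProd P₀ P₁ T j * prodSeg P₀ P₁ T j k = adiabProd P₀ P₁ T k := by
  obtain ⟨d, rfl⟩ := Nat.exists_eq_add_of_le hjk
  simp only [adiabProd, prodSeg_eq_prod_map, Nat.sub_zero, Nat.add_sub_cancel_left, List.range_add,
    List.map_append, List.prod_append, List.map_map]
  congr! 3
  funext i
  simp only [Function.comp_apply, Nat.zero_add]

theorem isStochastic_adiabProd (hP₀ : IsStochastic P₀) (hP₁ : IsStochastic P₁) {T k : ℕ}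
    (hk : k ≤ T) : IsStochastic (adiabProd P₀ P₁ T k) := by
  obtain ⟨L, hprod, -, hL⟩ := exists_prodSeg_eq_list_prod (P₀ := P₀) (P₁ := P₁) T 0 k
  rw [adiabProd, hprod]
  refine IsStochastic.list_prod fun A hA => ?_
  obtain ⟨m, -, hm, rfl⟩ := hL A hA
  exact isStochastic_Pt_div hP₀ hP₁ (hm.trans hk)

/-- When `k < M` the window of the last `M` steps is padded with copies of `P₀`, which fix
`π₀`. -/
theorem exists_vecMul_adiabProd_eq_window {π₀ : Fin n → ℝ} (hπ₀ : π₀ ᵥ* P₀ = π₀) (T M k : ℕ) :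
    ∃ j ≤ k, ∃ L : List (Matrix (Fin n) (Fin n) ℝ), L.length = M ∧
      (∀ A ∈ L, ∃ m ≤ k, k ≤ m + M ∧ A = Pt P₀ P₁ (m / T)) ∧
      π₀ ᵥ* adiabProd P₀ P₁ T k = (π₀ ᵥ* adiabProd P₀ P₁ T j) ᵥ* L.prod := by
  rcases le_total M k with hMk | hkM
  · obtain ⟨L, hprod, hlen, hL⟩ := exists_prodSeg_eq_list_prod (P₀ := P₀) (P₁ := P₁) T (k - M) k
    refine ⟨k - M, by omega, L, by omega, fun A hA => ?_, ?_⟩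
    · obtain ⟨m, hm, hmk, rfl⟩ := hL A hA
      exact ⟨m, hmk, by omega, rfl⟩
    · rw [vecMul_vecMul, ← hprod, adiabProd_mul_prodSeg T (by omega)]
  · obtain ⟨L, hprod, hlen, hL⟩ := exists_prodSeg_eq_list_prod (P₀ := P₀) (P₁ := P₁) T 0 k
    refine ⟨0, Nat.zero_le k, List.replicate (M - k) P₀ ++ L, by simp; omega, fun A hA => ?_, ?_⟩
    · rcases List.mem_append.1 hA with hA | hA
      · exact ⟨0, by omega, by omega, by simp [List.eq_of_mem_replicate hA, Pt]⟩
      · obtain ⟨m, -, hmk, rfl⟩ := hL A hA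
        exact ⟨m, hmk, by omega, rfl⟩
    · have h0 : adiabProd P₀ P₁ T 0 = 1 := by simp [adiabProd, prodSeg]
      rw [adiabProd, hprod, List.prod_append, List.prod_replicate, ← vecMul_vecMul, h0, vecMul_one,
        vecMul_pow_eq_self hπ₀]

theorem tvDist_vecMul_adiabProd_le (hP₀ : IsStochastic P₀) (hP₁ : IsStochastic P₁)
    {π₀ p : Fin n → ℝ} (hπ₀ : IsProbVec π₀) (hπ₀P₀ : π₀ ᵥ* P₀ = π₀) {T M k : ℕ} (hk : k ≤ T)
    {ε : ℝ} (hmix : IsMixingHorizon (Pt P₀ P₁ (k / T)) p ε M) :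
    tvDist (π₀ ᵥ* adiabProd P₀ P₁ T k) p ≤ M ^ 2 / T + ε := by
  obtain ⟨j, hjk, L, hlen, hL, heq⟩ :=
    exists_vecMul_adiabProd_eq_window (P₁ := P₁) hπ₀P₀ T M k
  set ν := π₀ ᵥ* adiabProd P₀ P₁ T j
  have hν : IsProbVec ν := hπ₀.vecMul (isStochastic_adiabProd hP₀ hP₁ (hjk.trans hk))
  have hLB : ∀ A ∈ L, ∀ i, ∑ j, |A i j - Pt P₀ P₁ (k / T) i j| ≤ 2 * (M / T) := by
    rintro A hA i
    obtain ⟨m, hmk, hkm, rfl⟩ := hL A hA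
    refine (sum_abs_Pt_sub_Pt_le hP₀ hP₁ _ _ i).trans ?_
    rw [← sub_div, abs_div, Nat.abs_cast, abs_sub_comm, abs_of_nonneg (by simpa using hmk)]
    gcongr
    have : (k : ℝ) ≤ m + M := by exact_mod_cast hkm
    linarith
  have hwindow := tvDist_vecMul_list_prod_le (isStochastic_Pt_div hP₀ hP₁ hk) (fun A hA => by
    obtain ⟨m, hmk, -, rfl⟩ := hL A hA
    exact isStochastic_Pt_div hP₀ hP₁ (hmk.trans hk)) hLB hν
  rw [hlen] at hwindow
  calc tvDist (π₀ ᵥ* adiabProd P₀ P₁ T k) p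
      ≤ tvDist (ν ᵥ* L.prod) (ν ᵥ* Pt P₀ P₁ (k / T) ^ M) + tvDist (ν ᵥ* Pt P₀ P₁ (k / T) ^ M) p :=
        heq ▸ tvDist_triangle _ _ _
    _ ≤ M * (2 * (M / T)) / 2 + ε := add_le_add hwindow (hmix ν hν)
    _ = M ^ 2 / T + ε := by ring

end Adiabatic

theorem sq_div_le_of_pow_four_div_le {ε : ℝ} (hε0 : 0 < ε) (hε1 : ε ≤ 1) {M T : ℕ}
    (h : 4 * (M : ℝ) ^ 4 / ε ^ 3 ≤ T) : (M : ℝ) ^ 2 / T ≤ ε / 4 := by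
  have hM : (M : ℝ) ^ 2 ≤ (M : ℝ) ^ 4 := by
    rcases M.eq_zero_or_pos with rfl | hM
    · simp
    · exact pow_le_pow_right₀ (by exact_mod_cast hM) (by norm_num)
  have hTε : (T : ℝ) * ε ^ 3 ≤ T * ε :=
    mul_le_mul_of_nonneg_left (pow_le_of_le_one hε0.le hε1 (by norm_num)) T.cast_nonneg
  rw [div_le_iff₀ (by positivity)] at h
  exact div_le_of_le_mul₀ T.cast_nonneg (by positivity) (by linarith)

theorem stmt_3_general {n : ℕ} (hn : 1 ≤ n) (P₀ P₁ : Matrix (Fin n) (Fin n) ℝ)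
    (hP₀ : IsStochastic P₀) (hP₀i : MCIrreducible P₀) (hP₀a : MCAperiodic P₀)
    (hP₁ : IsStochastic P₁) (hP₁i : MCIrreducible P₁) (hP₁a : MCAperiodic P₁)
    (π : ℝ → Fin n → ℝ)
    (hπ : ∀ t ∈ Set.Icc (0 : ℝ) 1, IsProbVec (π t) ∧ (π t) ᵥ* (Pt P₀ P₁ t) = π t)
    (ε : ℝ) (hε0 : 0 < ε) (hε1 : ε < 1 / Real.sqrt n)
    (T : ℕ)
    (hT1 : 4 * (maxMixingTime P₀ P₁ π (ε / 2) : ℝ) ^ 4 / ε ^ 3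
         + 4 * (maxMixingTime P₀ P₁ π (ε / 2) : ℝ) ^ 2 / ε ^ 2 + 1 / ε ≤ (T : ℝ))
    (k : ℕ) (hk2 : k ≤ T) :
    tvDist ((π 0) ᵥ* adiabProd P₀ P₁ T k) (π ((k : ℝ) / (T : ℝ))) ≤ ε := by
  have : Nonempty (Fin n) := ⟨⟨0, hn⟩⟩
  have hε : ε ≤ 1 := hε1.le.trans
    (div_le_one_of_le₀ (Real.one_le_sqrt.2 (by exact_mod_cast hn)) (Real.sqrt_nonneg _))
  set M := maxMixingTime P₀ P₁ π (ε / 2)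
  have hMT : (M : ℝ) ^ 2 / T ≤ ε / 4 := sq_div_le_of_pow_four_div_le hε0 hε
    ((le_add_of_nonneg_right (by positivity)).trans
      ((le_add_of_nonneg_right (by positivity)).trans hT1))
  have hπ₀ := hπ 0 ⟨le_rfl, zero_le_one⟩
  have hk : (k : ℝ) / T ∈ Set.Icc (0 : ℝ) 1 :=
    ⟨by positivity, div_le_one_of_le₀ (by exact_mod_cast hk2) T.cast_nonneg⟩
  have := tvDist_vecMul_adiabProd_le hP₀ hP₁ hπ₀.1 (by simpa [Pt] using hπ₀.2) hk2
    (isMixingHorizon_maxMixingTime hP₀ hP₀i hP₀a hP₁ hP₁i hP₁a hπ (half_pos hε0) hk)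
  linarith

/-- For 0 < ε < 1/√n and every integer T with
T ≥ 4 t_mix(ε/2)⁴/ε³ + 4 t_mix(ε/2)²/ε² + 1/ε and
√(ε/T) − 1/T ≤ ε(1 − √n ε)/(4 n^{3/2} t_mix(ε/2)), one has
`‖π₀ P_{1/T} ⋯ P_{k/T} − π_{k/T}‖_TV ≤ ε` for every 1 ≤ k ≤ T. -/
theorem stmt_3 {n : ℕ} (hn : 1 ≤ n) (P₀ P₁ : Matrix (Fin n) (Fin n) ℝ)
    (hP₀ : IsStochastic P₀) (hP₀i : MCIrreducible P₀) (hP₀a : MCAperiodic P₀)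
    (hP₁ : IsStochastic P₁) (hP₁i : MCIrreducible P₁) (hP₁a : MCAperiodic P₁)
    (π : ℝ → Fin n → ℝ)
    (hπ : ∀ t ∈ Set.Icc (0 : ℝ) 1, IsProbVec (π t) ∧ (π t) ᵥ* (Pt P₀ P₁ t) = π t)
    (ε : ℝ) (hε0 : 0 < ε) (hε1 : ε < 1 / Real.sqrt n)
    (T : ℕ)
    (hT1 : 4 * (maxMixingTime P₀ P₁ π (ε / 2) : ℝ) ^ 4 / ε ^ 3
         + 4 * (maxMixingTime P₀ P₁ π (ε / 2) : ℝ) ^ 2 / ε ^ 2 + 1 / ε ≤ (T : ℝ))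
    (hT2 : Real.sqrt (ε / (T : ℝ)) - 1 / (T : ℝ)
         ≤ ε * (1 - Real.sqrt n * ε)
             / (4 * (n : ℝ) ^ ((3 : ℝ) / 2) * (maxMixingTime P₀ P₁ π (ε / 2) : ℝ)))
    (k : ℕ) (hk1 : 1 ≤ k) (hk2 : k ≤ T) :
    tvDist ((π 0) ᵥ* adiabProd P₀ P₁ T k) (π ((k : ℝ) / (T : ℝ))) ≤ ε :=
  stmt_3_general hn P₀ P₁ hP₀ hP₀i hP₀a hP₁ hP₁i hP₁a π hπ ε hε0 hε1 T hT1 k hk2
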